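/- For every integer n ≥ 2 and each z ∈ {x, y}: every proper 3-coloring σ of the graph H_n with σ(v) = 3 and σ(z) = 1 equals η. -/

import Mathlib

/-- Vertices of the gadget graph `H_n`: `x`, `y`, `v`, and the vertices `u_{1,i}`
(`a i`) and `u_{2,i}` (`b i`) for `1 ≤ i ≤ n`. -/
inductive HVert (n : ℕ) : Type
  | x : HVert n
  | y : HVert n
  | v : HVert n
  | a : Fin n → HVert n
  | b : Fin n → HVert n

/-- The edges of `H_n`: for each `1 ≤ i ≤ n`, all edges of the triangles
`{x, u_{1,i}, u_{2,i}}` and `{y, u_{1,i}, u_{2,i}}`, together with the edge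
`v u_{1,i}`. -/
def HRel (n : ℕ) : HVert n → HVert n → Prop
  | .x, .a _ => True
  | .x, .b _ => True
  | .y, .a _ => True
  | .y, .b _ => True
  | .v, .a _ => True
  | .a i, .b j => i = j
  | _, _ => False

/-- The gadget graph `H_n`. -/
def Hgraph (n : ℕ) : SimpleGraph (HVert n) := SimpleGraph.fromRel (HRel n)

/-- The coloring `η` of `H_n`; colors `1, 2, 3` are modelled as `0, 1, 2 : Fin 3`:
`η(v) = 3`, `η(x) = η(y) = 1`, `η(u_{1,i}) = 2`, `η(u_{2,i}) = 3`. -/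
def ηH (n : ℕ) : HVert n → Fin 3
  | .x => 0
  | .y => 0
  | .v => 2
  | .a _ => 1
  | .b _ => 2

/-!
Each `u_{1,i}` sees `v` (color 3) and `w` (color 1), so it gets color 2; then each `u_{2,i}` sees
`w` and `u_{1,i}`, so it gets color 3. Both `x` and `y` see the edge `u_{1,1} u_{2,1}`, colored
2 and 3, so both get color 1.
-/

theorem SimpleGraph.color_eq_third_of_adj_of_adj {V : Type*} {G : SimpleGraph V} {σ : V → Fin 3}
    (hσ : ∀ p q, G.Adj p q → σ p ≠ σ q) {p q r : V} (hpq : G.Adj p q) (hpr : G.Adj p r)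
    {c c₁ c₂ : Fin 3} (hq : σ q = c₁) (hr : σ r = c₂) (hc : c ≠ c₁ ∧ c ≠ c₂ ∧ c₁ ≠ c₂) :
    σ p = c := by
  have h₁ := hσ p q hpq
  have h₂ := hσ p r hpr
  rw [hq] at h₁
  rw [hr] at h₂
  omega

namespace Hgraph

variable {n : ℕ}

theorem adj_of_rel {p q : HVert n} (h : HRel n p q) : (Hgraph n).Adj p q :=
  (SimpleGraph.fromRel_adj _ _ _).mpr
    ⟨by rintro rfl; cases p <;> simp [HRel] at h, Or.inl h⟩

theorem adj_a_b (i : Fin n) : (Hgraph n).Adj (.a i) (.b i) := adj_of_rel rfl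

theorem adj_v_a (i : Fin n) : (Hgraph n).Adj .v (.a i) := adj_of_rel trivial

theorem adj_apex_a {z : HVert n} (hz : z = .x ∨ z = .y) (i : Fin n) :
    (Hgraph n).Adj z (.a i) := by
  rcases hz with rfl | rfl <;> exact adj_of_rel trivial

theorem adj_apex_b {z : HVert n} (hz : z = .x ∨ z = .y) (i : Fin n) :
    (Hgraph n).Adj z (.b i) := by
  rcases hz with rfl | rfl <;> exact adj_of_rel trivial

end Hgraph

open Hgraph SimpleGraph in
/-- For every `n ≥ 2` and each `w ∈ {x, y}`: every proper 3-coloring `σ` of `H_n` with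
`σ(v) = 3` and `σ(w) = 1` (colors `1, 2, 3` are modelled as `0, 1, 2 : Fin 3`) is
equal to `η`. -/
theorem stmt15 (n : ℕ) (hn : 2 ≤ n) (w : HVert n) (hw : w = .x ∨ w = .y)
    (σ : HVert n → Fin 3) (hproper : ∀ p q, (Hgraph n).Adj p q → σ p ≠ σ q)
    (hv : σ .v = 2) (hz : σ w = 0) :
    σ = ηH n := by
  have ha (i : Fin n) : σ (.a i) = 1 :=
    color_eq_third_of_adj_of_adj hproper (adj_apex_a hw i).symm (adj_v_a i).symm hz hv (by decide)
  have hb (i : Fin n) : σ (.b i) = 2 :=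
    color_eq_third_of_adj_of_adj hproper (adj_apex_b hw i).symm (adj_a_b i).symm hz (ha i)
      (by decide)
  have hapex {z : HVert n} (hxy : z = .x ∨ z = .y) : σ z = 0 :=
    color_eq_third_of_adj_of_adj hproper (adj_apex_a hxy ⟨0, by omega⟩)
      (adj_apex_b hxy ⟨0, by omega⟩) (ha _) (hb _) (by decide)
  funext p
  cases p with
  | x => exact hapex (.inl rfl)
  | y => exact hapex (.inr rfl)
  | v => exact hv
  | a i => exact ha i
  | b i => exact hb i
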